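/- arXiv:1502.06284 — 9 statements merged into one kernel-verified Lean document; each statement's English description precedes it below -/
import Mathlib

section
/- Let Γ ⊆ ℤ² and let φ be a state on Γ. Suppose there exists a function F : ℤ² → ℤ≥0 with F = 0 outside Γ such that (φ + ΔF)(v) ≤ 3 for every v ∈ Γ. Then for every legal toppling sequence v₁, …, v_m for φ and every vertex v ∈ Γ, the toppling count satisfies H_m(v) ≤ F(v). (Least action principle: any legal relaxation performs at each vertex at most F(v) topplings.) -/
/-- The discrete Laplacian on `ℤ × ℤ`: sum over the four grid neighbors minus `4` times
the value at the point. -/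
def lap (H : ℤ × ℤ → ℤ) (v : ℤ × ℤ) : ℤ :=
  H (v.1 + 1, v.2) + H (v.1 - 1, v.2) + H (v.1, v.2 + 1) + H (v.1, v.2 - 1) - 4 * H v

/-- `topCount s i u` is the number of indices `j < i` with `s j = u`
(the toppling count after `i` steps). -/
def topCount (s : ℕ → ℤ × ℤ) (i : ℕ) (u : ℤ × ℤ) : ℤ :=
  (((Finset.range i).filter (fun j => s j = u)).card : ℤ)

/-- The first `m` terms of `s` form a legal toppling sequence for the state `φ` on `Γ`:
each toppled vertex lies in `Γ` and is unstable (has ≥ 4 grains) at the moment of toppling. -/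
def Legal (Γ : Set (ℤ × ℤ)) (φ : ℤ × ℤ → ℤ) (s : ℕ → ℤ × ℤ) (m : ℕ) : Prop :=
  ∀ i < m, s i ∈ Γ ∧ 4 ≤ φ (s i) + lap (topCount s i) (s i)

lemma topCount_succ (s : ℕ → ℤ × ℤ) (i : ℕ) (u : ℤ × ℤ) :
    topCount s (i + 1) u = topCount s i u + (if s i = u then 1 else 0) := by
  unfold topCount
  rw [Finset.range_add_one, Finset.filter_insert]
  split
  · rw [Finset.card_insert_of_notMem (by simp)]
    push_cast; ring
  · simp

/-- Least action principle: if `F : ℤ² → ℤ≥0` vanishes outside `Γ` and `φ + ΔF ≤ 3` on `Γ`,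
then every legal toppling sequence for `φ` topples each vertex at most `F v` times. -/
theorem least_action_principle (Γ : Set (ℤ × ℤ)) (φ F : ℤ × ℤ → ℤ)
    (hφ0 : ∀ v, 0 ≤ φ v) (hφΓ : ∀ v, v ∉ Γ → φ v = 0)
    (hF0 : ∀ v, 0 ≤ F v) (hFΓ : ∀ v, v ∉ Γ → F v = 0)
    (hstab : ∀ v ∈ Γ, φ v + lap F v ≤ 3)
    (s : ℕ → ℤ × ℤ) (m : ℕ) (hs : Legal Γ φ s m) :
    ∀ v ∈ Γ, topCount s m v ≤ F v := by
  have key : ∀ i ≤ m, ∀ v, topCount s i v ≤ F v := by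
    intro i
    induction i with
    | zero => intro _ v; simp [topCount]; exact hF0 v
    | succ i ih =>
      intro hi v
      have him : i ≤ m := Nat.le_of_succ_le hi
      have ihv := ih him
      rw [topCount_succ]
      by_cases hv : s i = v
      · simp only [hv, if_true]
        -- need topCount s i v + 1 ≤ F v, i.e. topCount s i v < F v
        by_contra hcon
        push_neg at hcon
        have heq : topCount s i v = F v := le_antisymm (ihv v) (by linarith)
        obtain ⟨hmem, hleg⟩ := hs i (Nat.lt_of_succ_le hi)
        rw [hv] at hmem hleg
        have hlap : lap (topCount s i) v ≤ lap F v := by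
          unfold lap
          have h1 := ihv (v.1 + 1, v.2)
          have h2 := ihv (v.1 - 1, v.2)
          have h3 := ihv (v.1, v.2 + 1)
          have h4 := ihv (v.1, v.2 - 1)
          rw [heq]
          linarith
        have := hstab v hmem
        linarith
      · simp only [hv, if_false, add_zero]
        exact ihv v
  exact fun v _ => key m le_rfl v
end

section
/- There is no function H : ℤ² → ℤ≥0 such that ΔH(v) ≤ −1 for every v ∈ ℤ². (Consequently the constant state equal to 4 at every vertex of ℤ² admits no stabilizing relaxation, since a stabilizing relaxation would have a toppling function H with 4 + ΔH(v) ≤ 3 everywhere.) -/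
/-- Any point has a grid neighbor with strictly smaller value, when `lap H ≤ -1`. -/
lemma exists_smaller_neighbor (H : ℤ × ℤ → ℤ) (v : ℤ × ℤ) (h : lap H v ≤ -1) :
    ∃ w : ℤ × ℤ, H w < H v := by
  by_contra hc
  push_neg at hc
  have h1 := hc (v.1 + 1, v.2)
  have h2 := hc (v.1 - 1, v.2)
  have h3 := hc (v.1, v.2 + 1)
  have h4 := hc (v.1, v.2 - 1)
  unfold lap at h
  linarith

/-- There is no nonnegative integer-valued function on `ℤ²` whose discrete Laplacian is
everywhere at most `-1`. -/
theorem no_global_strictly_superharmonic :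
    ¬ ∃ H : ℤ × ℤ → ℤ, (∀ v, 0 ≤ H v) ∧ (∀ v, lap H v ≤ -1) := by
  rintro ⟨H, hpos, hlap⟩
  have key : ∀ n : ℕ, ∀ v : ℤ × ℤ, ¬ (H v ≤ (n : ℤ)) := by
    intro n
    induction n with
    | zero =>
      intro v hv
      obtain ⟨w, hw⟩ := exists_smaller_neighbor H v (hlap v)
      have := hpos w
      omega
    | succ n ih =>
      intro v hv
      obtain ⟨w, hw⟩ := exists_smaller_neighbor H v (hlap v)
      exact ih w (by omega)
  exact key (H (0, 0)).toNat (0, 0) (by have := hpos (0, 0); omega)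
end

section
/- Let Γ ⊆ ℤ² and let v, v′ ∈ Γ lie in the same connected component of the grid graph induced on Γ (vertices Γ, edges between points at Euclidean distance 1). Then for every state φ on Γ there exists N ∈ ℕ such that the state φ + N·δ_v admits a legal toppling sequence that contains a toppling at v′ (i.e. v′ occurs among its terms). Moreover N can be taken to be 4^{L+1}, where L is the length of a path in the induced grid graph from v to v′. -/
/-- Two points of `ℤ²` are adjacent if their Euclidean distance is `1`. -/
def Adj (a b : ℤ × ℤ) : Prop :=
  (a.1 - b.1) ^ 2 + (a.2 - b.2) ^ 2 = 1

def myBlock (L : ℕ) (i : ℕ) : ℕ := ∑ k ∈ Finset.range i, 4 ^ (L - k)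

lemma myBlock_succ (L i : ℕ) : myBlock L (i+1) = myBlock L i + 4 ^ (L - i) :=
  Finset.sum_range_succ _ _

lemma myBlock_mono (L : ℕ) : Monotone (myBlock L) := fun _ _ h =>
  Finset.sum_le_sum_of_subset (Finset.range_subset_range.2 h)

lemma self_le_myBlock (L i : ℕ) : i ≤ myBlock L i := by
  induction i with
  | zero => simp [myBlock]
  | succ n ih =>
    have h1 : 1 ≤ 4 ^ (L - n) := Nat.one_le_pow _ _ (by norm_num)
    rw [myBlock_succ]; omega

lemma exists_lt_myBlock (L j : ℕ) : ∃ i, j < myBlock L (i+1) :=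
  ⟨j, lt_of_lt_of_le (Nat.lt_succ_self j) (self_le_myBlock L (j+1))⟩

def myIdx (L j : ℕ) : ℕ := Nat.find (exists_lt_myBlock L j)

lemma myIdx_spec (L j : ℕ) : j < myBlock L (myIdx L j + 1) :=
  Nat.find_spec (exists_lt_myBlock L j)

lemma myBlock_myIdx_le (L j : ℕ) : myBlock L (myIdx L j) ≤ j := by
  cases h : myIdx L j with
  | zero => simp [myBlock]
  | succ k =>
    have hm := Nat.find_min (exists_lt_myBlock L j) (m := k) (show k < Nat.find (exists_lt_myBlock L j) by rw [← myIdx, h]; omega)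
    simp only [not_lt] at hm
    simpa [myBlock_succ] using hm

lemma myIdx_eq (L j i : ℕ) (h1 : myBlock L i ≤ j) (h2 : j < myBlock L (i+1)) :
    myIdx L j = i := by
  have hle : myIdx L j ≤ i := Nat.find_le h2
  by_contra hne
  have hlt : myIdx L j < i := lt_of_le_of_ne hle hne
  have hspec := myIdx_spec L j
  have hmono : myBlock L (myIdx L j + 1) ≤ myBlock L i := myBlock_mono L (by omega)
  omega

lemma sq_sum_one {x y : ℤ} (h : x^2 + y^2 = 1) :
    (x = 1 ∧ y = 0) ∨ (x = -1 ∧ y = 0) ∨ (x = 0 ∧ y = 1) ∨ (x = 0 ∧ y = -1) := by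
  have hx1 : -1 ≤ x := by nlinarith [sq_nonneg (x+1), sq_nonneg y]
  have hx2 : x ≤ 1 := by nlinarith [sq_nonneg (x-1), sq_nonneg y]
  have hy1 : -1 ≤ y := by nlinarith [sq_nonneg (y+1), sq_nonneg x]
  have hy2 : y ≤ 1 := by nlinarith [sq_nonneg (y-1), sq_nonneg x]
  interval_cases x <;> interval_cases y <;> simp_all





lemma adj_cases {a b : ℤ × ℤ} (h : Adj a b) :
    a = (b.1 + 1, b.2) ∨ a = (b.1 - 1, b.2) ∨ a = (b.1, b.2 + 1) ∨ a = (b.1, b.2 - 1) := by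
  rcases sq_sum_one h with ⟨h1, h2⟩ | ⟨h1, h2⟩ | ⟨h1, h2⟩ | ⟨h1, h2⟩
  · exact Or.inl (Prod.ext (by omega) (by omega))
  · exact Or.inr (Or.inl (Prod.ext (by omega) (by omega)))
  · exact Or.inr (Or.inr (Or.inl (Prod.ext (by omega) (by omega))))
  · exact Or.inr (Or.inr (Or.inr (Prod.ext (by omega) (by omega))))

lemma legal_block (Γ : Set (ℤ × ℤ)) (φ : ℤ × ℤ → ℤ)
    (hφ0 : ∀ v, 0 ≤ φ v)
    (v v' : ℤ × ℤ) (p : ℕ → ℤ × ℤ) (L : ℕ) (N : ℤ)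
    (hN : (4:ℤ) ^ (L+1) ≤ N)
    (hp0 : p 0 = v) (hpL : p L = v')
    (hpΓ : ∀ i ≤ L, p i ∈ Γ)
    (hadj : ∀ i < L, Adj (p i) (p (i + 1)))
    (hinj : ∀ a ≤ L, ∀ b ≤ L, p a = p b → a = b) :
    ∃ (s : ℕ → ℤ × ℤ) (m : ℕ),
      Legal Γ (fun u => φ u + N * (if u = v then 1 else 0)) s m ∧
      ∃ i < m, s i = v' := by
  refine ⟨fun j => p (myIdx L j), myBlock L (L+1), ?_, myBlock L L, ?_, ?_⟩
  · -- legality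
    intro j hj
    set s : ℕ → ℤ × ℤ := fun j => p (myIdx L j) with hs
    set i := myIdx L j with hidef
    have hiL : i ≤ L := Nat.find_le hj
    have h1 : myBlock L i ≤ j := myBlock_myIdx_le L j
    have h2 : j < myBlock L i + 4 ^ (L - i) := by
      have := myIdx_spec L j; rwa [myBlock_succ] at this
    -- exact count at p i
    have hcount_i : topCount s j (p i) = ((j - myBlock L i : ℕ) : ℤ) := by
      unfold topCount
      congr 1
      have hset : (Finset.range j).filter (fun j' => s j' = p i)
          = Finset.Ico (myBlock L i) j := by
        ext j'
        simp only [Finset.mem_filter, Finset.mem_range, Finset.mem_Ico]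
        constructor
        · rintro ⟨hj', heq⟩
          have hj'L : myIdx L j' ≤ L := Nat.find_le (lt_trans hj' hj)
          have : myIdx L j' = i := hinj _ hj'L _ hiL heq
          exact ⟨this ▸ myBlock_myIdx_le L j', hj'⟩
        · rintro ⟨ha, hb⟩
          have : myIdx L j' = i := myIdx_eq L j' i ha (by rw [myBlock_succ]; omega)
          exact ⟨hb, by rw [hs]; simp only; rw [this]⟩
      rw [hset, Nat.card_Ico]
    -- lower bound at previous vertex
    have hcount_prev : ∀ k, i = k + 1 → (4:ℤ) ^ (L - k) ≤ topCount s j (p k) := by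
      intro k hk
      unfold topCount
      have hsub : Finset.Ico (myBlock L k) (myBlock L (k+1)) ⊆
          (Finset.range j).filter (fun j' => s j' = p k) := by
        intro j' hj'
        simp only [Finset.mem_Ico] at hj'
        have hidx : myIdx L j' = k := myIdx_eq L j' k hj'.1 hj'.2
        have hle : myBlock L (k+1) ≤ myBlock L i := myBlock_mono L (by omega)
        simp only [Finset.mem_filter, Finset.mem_range]
        exact ⟨by omega, by rw [hs]; simp only; rw [hidx]⟩
      have hcard := Finset.card_le_card hsub
      rw [Nat.card_Ico, myBlock_succ, Nat.add_sub_cancel_left] at hcard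
      calc (4:ℤ) ^ (L - k) = ((4 ^ (L - k) : ℕ) : ℤ) := by push_cast; ring
        _ ≤ _ := by exact_mod_cast hcard
    have hnn : ∀ u, 0 ≤ topCount s j u := fun u => Int.natCast_nonneg _
    have htle : ((j - myBlock L i : ℕ) : ℤ) ≤ (4:ℤ) ^ (L - i) - 1 := by
      have : (j - myBlock L i : ℕ) + 1 ≤ 4 ^ (L - i) := by omega
      have := (Nat.cast_le (α := ℤ)).2 this
      push_cast at this
      linarith
    refine ⟨hpΓ i hiL, ?_⟩
    show (4:ℤ) ≤ φ (s j) + N * (if s j = v then 1 else 0) + lap (topCount s j) (s j)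
    have hsj : s j = p i := rfl
    rw [hsj]
    unfold lap
    rw [hcount_i]
    rcases Nat.eq_zero_or_pos i with hi0 | hipos
    · -- i = 0 : vertex v
      rw [hi0] at htle ⊢
      have hvv : p 0 = v := hp0
      rw [hvv, if_pos rfl]
      have hN' : (4:ℤ) * 4 ^ L ≤ N := by
        rw [pow_succ] at hN; linarith
      have := hφ0 v
      have g1 := hnn ((v.1 + 1, v.2)); have g2 := hnn ((v.1 - 1, v.2))
      have g3 := hnn ((v.1, v.2 + 1)); have g4 := hnn ((v.1, v.2 - 1))
      simp only [Nat.sub_zero] at htle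
      linarith
    · obtain ⟨k, hk⟩ : ∃ k, i = k + 1 := ⟨i - 1, by omega⟩
      have hkL : k < L := by omega
      have hprev := hcount_prev k hk
      have hadjk := adj_cases (hadj k hkL)
      rw [← hk] at hadjk
      have hpow : (4:ℤ) ^ (L - k) = 4 * 4 ^ (L - i) := by
        have : L - k = (L - i) + 1 := by omega
        rw [this, pow_succ]; ring
      have hφ := hφ0 (p i)
      have hind : (0:ℤ) ≤ N * (if p i = v then 1 else 0) := by
        have : (0:ℤ) ≤ N := le_trans (by positivity) hN
        split <;> simp [this]
      have g1 := hnn (((p i).1 + 1, (p i).2)); have g2 := hnn (((p i).1 - 1, (p i).2))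
      have g3 := hnn (((p i).1, (p i).2 + 1)); have g4 := hnn (((p i).1, (p i).2 - 1))
      rcases hadjk with he | he | he | he <;> rw [he] at hprev <;> linarith
  · -- m bound
    rw [myBlock_succ]
    have : 1 ≤ 4 ^ (L - L) := Nat.one_le_pow _ _ (by norm_num)
    omega
  · -- topples v'
    show p (myIdx L (myBlock L L)) = v'
    have : myIdx L (myBlock L L) = L :=
      myIdx_eq L _ L le_rfl (by rw [myBlock_succ]; have : 1 ≤ 4 ^ (L - L) := Nat.one_le_pow _ _ (by norm_num); omega)
    rw [this, hpL]

lemma exists_inj_path (Γ : Set (ℤ × ℤ)) : ∀ L : ℕ, ∀ p : ℕ → ℤ × ℤ,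
    (∀ i ≤ L, p i ∈ Γ) → (∀ i < L, Adj (p i) (p (i + 1))) →
    ∃ (q : ℕ → ℤ × ℤ) (L' : ℕ), L' ≤ L ∧ q 0 = p 0 ∧ q L' = p L ∧
      (∀ i ≤ L', q i ∈ Γ) ∧ (∀ i < L', Adj (q i) (q (i + 1))) ∧
      (∀ a ≤ L', ∀ b ≤ L', q a = q b → a = b) := by
  intro L
  induction L using Nat.strong_induction_on with
  | _ L IH =>
    intro p hΓ hadj
    by_cases hdup : ∃ a, ∃ b ≤ L, a < b ∧ p a = p b
    · obtain ⟨a, b, hbL, hab, hpeq⟩ := hdup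
      set q : ℕ → ℤ × ℤ := fun j => if j ≤ a then p j else p (j + (b - a)) with hq
      have hLlt : L - (b - a) < L := by omega
      have hq0 : q 0 = p 0 := by simp [hq]
      have hqL : q (L - (b - a)) = p L := by
        by_cases hc : L - (b - a) ≤ a
        · have hbL' : b = L := by omega
          have haL : L - (b - a) = a := by omega
          rw [hq]; simp only [haL, le_refl, if_pos]
          rw [hpeq, hbL']
        · rw [hq]; simp only [if_neg hc]
          congr 1; omega
      have hqΓ : ∀ i ≤ L - (b - a), q i ∈ Γ := by
        intro i hi
        rw [hq]; simp only
        split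
        · exact hΓ i (by omega)
        · exact hΓ _ (by omega)
      have hqadj : ∀ i < L - (b - a), Adj (q i) (q (i + 1)) := by
        intro i hi
        rcases lt_trichotomy i a with h | h | h
        · have e1 : q i = p i := by rw [hq]; simp [Nat.le_of_lt h]
          have e2 : q (i+1) = p (i+1) := by
            rw [hq]; simp only [if_pos (show i + 1 ≤ a by omega)]
          rw [e1, e2]; exact hadj i (by omega)
        · subst h
          have e1 : q i = p b := by rw [hq]; simp [hpeq]
          have e2 : q (i+1) = p (b+1) := by
            rw [hq]; simp only [if_neg (by omega : ¬ i + 1 ≤ i)]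
            congr 1; omega
          rw [e1, e2]; exact hadj b (by omega)
        · have e1 : q i = p (i + (b - a)) := by rw [hq]; simp [Nat.not_le.2 h]
          have e2 : q (i+1) = p (i + 1 + (b - a)) := by
            rw [hq]; simp only [if_neg (by omega : ¬ i + 1 ≤ a)]
          rw [e1, e2]
          have : i + (b - a) + 1 = i + 1 + (b - a) := by omega
          rw [← this]
          exact hadj _ (by omega)
      obtain ⟨r, L', h1, h2, h3, h4, h5, h6⟩ := IH (L - (b - a)) hLlt q hqΓ hqadj
      exact ⟨r, L', by omega, by rw [h2, hq0], by rw [h3, hqL], h4, h5, h6⟩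
    · push_neg at hdup
      refine ⟨p, L, le_rfl, rfl, rfl, hΓ, hadj, ?_⟩
      intro x hx y hy hxy
      rcases lt_trichotomy x y with h | h | h
      · exact absurd hxy (hdup x y hy h)
      · exact h
      · exact absurd hxy.symm (hdup y x hx h)

/-- If `v` and `v'` lie in the same connected component of the grid graph induced on `Γ`
(witnessed by a path of length `L` inside `Γ`), then adding `N = 4^(L+1)` grains at `v`
produces a state admitting a legal toppling sequence that topples `v'`. -/
theorem spread_to_connected_vertex (Γ : Set (ℤ × ℤ)) (φ : ℤ × ℤ → ℤ)
    (hφ0 : ∀ v, 0 ≤ φ v) (hφΓ : ∀ v, v ∉ Γ → φ v = 0)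
    (v v' : ℤ × ℤ) (p : ℕ → ℤ × ℤ) (L : ℕ)
    (hp0 : p 0 = v) (hpL : p L = v')
    (hpΓ : ∀ i ≤ L, p i ∈ Γ)
    (hadj : ∀ i < L, Adj (p i) (p (i + 1))) :
    ∃ (s : ℕ → ℤ × ℤ) (m : ℕ),
      Legal Γ (fun u => φ u + 4 ^ (L + 1) * (if u = v then 1 else 0)) s m ∧
      ∃ i < m, s i = v' := by
  obtain ⟨q, L', hL', hq0, hqL, hqΓ, hqadj, hinj⟩ := exists_inj_path Γ L p hpΓ hadj
  have hN : (4:ℤ) ^ (L' + 1) ≤ 4 ^ (L + 1) :=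
    pow_le_pow_right₀ (by norm_num) (by omega)
  exact legal_block Γ φ hφ0 v v' q L' (4 ^ (L + 1)) hN (hq0.trans hp0)
    (hqL.trans hpL) hqΓ hqadj hinj
end

section
/- Let f, g : ℤ² → ℤ be superharmonic functions with f ≥ g pointwise, and suppose the difference h = f − g is bounded above and attains its maximum value m. Let h̃ : ℤ² → ℤ be the indicator function of the set {v : h(v) = m} (equal to 1 there and 0 elsewhere). Then f − h̃ is superharmonic. -/
/-- If `f ≥ g` are superharmonic with `h = f - g` attaining its maximal value `m`, then
subtracting from `f` the indicator of the set where `h = m` yields a superharmonic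
function. -/
theorem superharmonic_minus_indicator_of_max (f g : ℤ × ℤ → ℤ)
    (hf : ∀ v, lap f v ≤ 0) (hg : ∀ v, lap g v ≤ 0)
    (hfg : ∀ v, g v ≤ f v)
    (m : ℤ) (hub : ∀ v, f v - g v ≤ m) (hatt : ∃ v, f v - g v = m) :
    ∀ v, lap (fun u => f u - (if f u - g u = m then 1 else 0)) v ≤ 0 := by
  intro v
  have H1 := hf v
  have H2 := hg v
  simp only [lap] at H1 H2 ⊢
  have K : ∀ w : ℤ × ℤ, f w - g w - m + 1 ≤ (if f w - g w = m then (1:ℤ) else 0) ∧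
      0 ≤ (if f w - g w = m then (1:ℤ) else 0) := by
    intro w
    have := hub w
    split_ifs <;> omega
  obtain ⟨k1a, k1b⟩ := K (v.1 + 1, v.2)
  obtain ⟨k2a, k2b⟩ := K (v.1 - 1, v.2)
  obtain ⟨k3a, k3b⟩ := K (v.1, v.2 + 1)
  obtain ⟨k4a, k4b⟩ := K (v.1, v.2 - 1)
  by_cases hvm : f v - g v = m
  · simp only [if_pos hvm]
    omega
  · simp only [if_neg hvm]
    omega
end

section
/- Let p, q ∈ ℤ with (p, q) ≠ (0, 0) and c ∈ ℤ. Define f : ℤ² → ℤ by f(x, y) = min(q·x − p·y, c). Then Δf(v) ≤ 0 for every v ∈ ℤ², and Δf(v) = −(|p| + |q|) at every v = (x, y) with q·x − p·y = c. -/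
/-- For `(p, q) ≠ (0, 0)` the function `f(x, y) = min (q·x − p·y) c` is superharmonic,
and its Laplacian equals `−(|p| + |q|)` on the line `q·x − p·y = c`. -/
theorem lap_min_linear_const (p q c : ℤ) (hpq : (p, q) ≠ (0, 0)) :
    (∀ v : ℤ × ℤ, lap (fun u => min (q * u.1 - p * u.2) c) v ≤ 0) ∧
    (∀ v : ℤ × ℤ, q * v.1 - p * v.2 = c →
      lap (fun u => min (q * u.1 - p * u.2) c) v = -(|p| + |q|)) := by
  have key : ∀ v : ℤ × ℤ, lap (fun u => min (q * u.1 - p * u.2) c) v =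
      min ((q * v.1 - p * v.2) + q) c + min ((q * v.1 - p * v.2) - q) c +
      min ((q * v.1 - p * v.2) - p) c + min ((q * v.1 - p * v.2) + p) c -
      4 * min (q * v.1 - p * v.2) c := by
    intro v
    simp only [lap]
    congr 2 <;> ring_nf
  constructor
  · intro v
    rw [key v]
    set a := q * v.1 - p * v.2
    omega
  · intro v hv
    rw [key v, hv]
    rcases abs_cases p with ⟨hp, hp'⟩ | ⟨hp, hp'⟩ <;>
      rcases abs_cases q with ⟨hq, hq'⟩ | ⟨hq, hq'⟩ <;> omega
end

section
/- Let F₁, F₂ : ℝ² → ℝ be concave functions and p ∈ ℝ². If neither F₁ nor F₂ is differentiable at p, then the pointwise minimum x ↦ min(F₁(x), F₂(x)) is not differentiable at p. (A minimum of two concave functions having a kink at the same point also has a kink at this point.) -/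
/-- If `f` is concave, `g ≤ f` touches `f` at `p`, and `g` is differentiable at `p`,
then `f` is differentiable at `p` with the same derivative. -/
lemma hasFDerivAt_of_concave_touch {E : Type*} [NormedAddCommGroup E] [NormedSpace ℝ E]
    {f g : E → ℝ} {p : E} {L : E →L[ℝ] ℝ}
    (hf : ConcaveOn ℝ Set.univ f) (hle : ∀ x, g x ≤ f x) (heq : g p = f p)
    (hg : HasFDerivAt g L p) : HasFDerivAt f L p := by
  rw [hasFDerivAt_iff_isLittleO_nhds_zero] at hg ⊢
  rw [Asymptotics.isLittleO_iff]
  intro c hc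
  have tneg : Filter.Tendsto (fun h : E => -h) (nhds 0) (nhds 0) := by
    simpa using (continuous_neg.tendsto (0 : E))
  have hb1 := hg.def hc
  have hb2 := tneg.eventually (hg.def hc)
  filter_upwards [hb1, hb2] with h b1 b2
  have b2' : ‖g (p + -h) - g p - L (-h)‖ ≤ c * ‖h‖ := by simpa using b2
  -- concavity: f (p+h) + f (p-h) ≤ 2 * f p
  have hcon : (1/2 : ℝ) * f (p + h) + (1/2 : ℝ) * f (p + -h) ≤ f p := by
    have := hf.2 (Set.mem_univ (p + h)) (Set.mem_univ (p + -h))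
      (by norm_num : (0:ℝ) ≤ 1/2) (by norm_num : (0:ℝ) ≤ 1/2) (by norm_num)
    have hpt : (1/2 : ℝ) • (p + h) + (1/2 : ℝ) • (p + -h) = p := by
      module
    rw [hpt] at this
    simpa [smul_eq_mul] using this
  have hLneg : L (-h) = -L h := by simp
  have e1 : |g (p + h) - g p - L h| ≤ c * ‖h‖ := by
    simpa [Real.norm_eq_abs] using b1
  have e2 : |g (p + -h) - g p + L h| ≤ c * ‖h‖ := by
    rw [hLneg] at b2'
    simpa [Real.norm_eq_abs, sub_neg_eq_add] using b2'
  have l1 := hle (p + h)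
  have l2 := hle (p + -h)
  rw [Real.norm_eq_abs, abs_le]
  have a1 := abs_le.mp e1
  have a2 := abs_le.mp e2
  constructor
  · -- lower bound: f (p+h) - f p - L h ≥ g (p+h) - g p - L h ≥ -c‖h‖
    have : g (p + h) - g p - L h ≤ f (p + h) - f p - L h := by
      rw [heq] at *; linarith
    linarith [a1.1]
  · -- upper bound: f (p+h) - f p ≤ f p - f (p-h) ≤ g p - g (p-h)
    have : f (p + h) - f p - L h ≤ -(g (p + -h) - g p + L h) := by
      rw [heq] at *; linarith
    linarith [a2.1]

/-- A minimum of two concave functions on `ℝ²`, both having a kink (point of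
non-differentiability) at the same point `p`, also has a kink at `p`. -/
theorem min_concave_kink (F₁ F₂ : ℝ × ℝ → ℝ)
    (h₁ : ConcaveOn ℝ Set.univ F₁) (h₂ : ConcaveOn ℝ Set.univ F₂)
    (p : ℝ × ℝ)
    (hd₁ : ¬ DifferentiableAt ℝ F₁ p) (hd₂ : ¬ DifferentiableAt ℝ F₂ p) :
    ¬ DifferentiableAt ℝ (fun x => min (F₁ x) (F₂ x)) p := by
  intro hG
  rcases le_total (F₁ p) (F₂ p) with h | h
  · exact hd₁ (hasFDerivAt_of_concave_touch h₁
      (fun x => min_le_left _ _) (min_eq_left h) hG.hasFDerivAt).differentiableAt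
  · exact hd₂ (hasFDerivAt_of_concave_touch h₂
      (fun x => min_le_right _ _) (min_eq_right h) hG.hasFDerivAt).differentiableAt
end

section
/- Let p₀, q₀, p₁, q₁, p₂, q₂ ∈ ℤ with p₁q₂ − p₂q₁ = 1, and define f₀ : ℤ² → ℤ by f₀(x, y) = min(0, p₁x + q₁y, p₂x + q₂y) + p₀x + q₀y. Let C = {v ∈ ℤ² : Δf₀(v) < 0}. Let n > 0 and let f : ℤ² → ℤ be superharmonic with f₀ − n ≤ f ≤ f₀ pointwise. Then there exists r > 0, depending only on n, such that the function h = f₀ − f is constant on each connected component (with respect to grid adjacency in ℤ²) of the set {v ∈ ℤ² : dist(v, C) ≥ r}. -/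
/-- Euclidean distance between two points of `ℤ²`. -/
noncomputable def dst (v w : ℤ × ℤ) : ℝ :=
  Real.sqrt (((v.1 - w.1 : ℤ) : ℝ) ^ 2 + ((v.2 - w.2 : ℤ) : ℝ) ^ 2)

/-- The corner function `f₀(x,y) = min(0, p₁x + q₁y, p₂x + q₂y) + p₀x + q₀y`. -/
def f0 (p₀ q₀ p₁ q₁ p₂ q₂ : ℤ) (v : ℤ × ℤ) : ℤ :=
  min (min 0 (p₁ * v.1 + q₁ * v.2)) (p₂ * v.1 + q₂ * v.2) + p₀ * v.1 + q₀ * v.2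

/-- The set where the Laplacian of `f₀` is negative (the discrete tropical corner). -/
def Cset (p₀ q₀ p₁ q₁ p₂ q₂ : ℤ) : Set (ℤ × ℤ) :=
  {v | lap (f0 p₀ q₀ p₁ q₁ p₂ q₂) v < 0}

/-!
Away from `C` the function `h = f₀ - f` is subharmonic, and `0 ≤ h ≤ n`. A subharmonic
function on `ℤ²` that is not constant at a point `v` must grow by at least one on each
successive ℓ¹-sphere around `v`: if the maximum `M` of `h` on the ball of radius `k` were not
exceeded on the ball of radius `k + 1`, the strong maximum principle would propagate `M`
back to `v` and to all neighbours of `v`. Hence `h` cannot be non-constant at a point whose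
ℓ¹-ball of radius `n` misses `C`, and `r = n + 1` works.
-/

def l1Dist (u v : ℤ × ℤ) : ℕ := (u.1 - v.1).natAbs + (u.2 - v.2).natAbs

lemma l1Dist_eq_zero {u v : ℤ × ℤ} : l1Dist u v = 0 ↔ u = v := by
  simp only [l1Dist, Prod.ext_iff]
  omega

lemma finite_setOf_l1Dist_le (v : ℤ × ℤ) (k : ℕ) : {u | l1Dist u v ≤ k}.Finite :=
  (Set.finite_Icc (v.1 - k, v.2 - k) (v.1 + k, v.2 + k)).subset fun u (hu : l1Dist u v ≤ k) => by
    simp only [l1Dist] at hu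
    simp only [Set.mem_Icc, Prod.le_def]
    omega

lemma dst_le_l1Dist (u v : ℤ × ℤ) : dst v u ≤ l1Dist u v := by
  have hx : |((v.1 - u.1 : ℤ) : ℝ)| = (u.1 - v.1).natAbs := by
    rw [Nat.cast_natAbs, Int.cast_abs, ← abs_neg]; push_cast; ring_nf
  have hy : |((v.2 - u.2 : ℤ) : ℝ)| = (u.2 - v.2).natAbs := by
    rw [Nat.cast_natAbs, Int.cast_abs, ← abs_neg]; push_cast; ring_nf
  rw [dst, l1Dist, Nat.cast_add, ← hx, ← hy, Real.sqrt_le_iff]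
  refine ⟨by positivity, ?_⟩
  nlinarith [sq_abs ((v.1 - u.1 : ℤ) : ℝ), sq_abs ((v.2 - u.2 : ℤ) : ℝ),
    abs_nonneg ((v.1 - u.1 : ℤ) : ℝ), abs_nonneg ((v.2 - u.2 : ℤ) : ℝ)]

lemma adj_cases_s14 {v w : ℤ × ℤ} (h : Adj v w) :
    w = (v.1 + 1, v.2) ∨ w = (v.1 - 1, v.2) ∨ w = (v.1, v.2 + 1) ∨ w = (v.1, v.2 - 1) := by
  obtain ⟨a, b⟩ := w
  simp only [Adj, Prod.mk.injEq] at *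
  have : -1 ≤ v.1 - a ∧ v.1 - a ≤ 1 := by
    constructor <;>
      nlinarith [sq_nonneg (v.2 - b), sq_nonneg (v.1 - a + 1), sq_nonneg (v.1 - a - 1)]
  have : -1 ≤ v.2 - b ∧ v.2 - b ≤ 1 := by
    constructor <;>
      nlinarith [sq_nonneg (v.1 - a), sq_nonneg (v.2 - b + 1), sq_nonneg (v.2 - b - 1)]
  rcases (by omega : v.1 - a = -1 ∨ v.1 - a = 0 ∨ v.1 - a = 1) with h1 | h1 | h1 <;>
  rcases (by omega : v.2 - b = -1 ∨ v.2 - b = 0 ∨ v.2 - b = 1) with h2 | h2 | h2 <;>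
  simp only [h1, h2] at h <;> omega

lemma l1Dist_le_of_adj {u w : ℤ × ℤ} (h : Adj u w) (v : ℤ × ℤ) :
    l1Dist w v ≤ l1Dist u v + 1 := by
  rcases adj_cases_s14 h with rfl | rfl | rfl | rfl <;> simp only [l1Dist] <;> omega

lemma exists_adj_l1Dist_succ {u v : ℤ × ℤ} (h : u ≠ v) :
    ∃ u', Adj u u' ∧ l1Dist u' v + 1 = l1Dist u v := by
  obtain ⟨a, b⟩ := u
  obtain ⟨c, d⟩ := v
  simp only [ne_eq, Prod.mk.injEq, not_and_or] at h
  rcases lt_trichotomy a c with hac | rfl | hac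
  · exact ⟨(a + 1, b), by simp [Adj], by simp only [l1Dist]; omega⟩
  · rcases lt_or_gt_of_ne (by simpa using h : b ≠ d) with hbd | hbd
    · exact ⟨(a, b + 1), by simp [Adj], by simp only [l1Dist]; omega⟩
    · exact ⟨(a, b - 1), by simp [Adj], by simp only [l1Dist]; omega⟩
  · exact ⟨(a - 1, b), by simp [Adj], by simp only [l1Dist]; omega⟩

lemma lap_sub (F G : ℤ × ℤ → ℤ) (v : ℤ × ℤ) :
    lap (fun u => F u - G u) v = lap F v - lap G v := by
  simp only [lap]; ring

section Subharmonic

variable {h : ℤ × ℤ → ℤ} {v : ℤ × ℤ} {M : ℤ}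

lemma eq_of_adj_of_lap_nonneg_of_le {u w : ℤ × ℤ} (hl : 0 ≤ lap h u) (hu : h u = M)
    (hle : ∀ w, Adj u w → h w ≤ M) (huw : Adj u w) : h w = M := by
  have h₁ := hle (u.1 + 1, u.2) (by simp [Adj])
  have h₂ := hle (u.1 - 1, u.2) (by simp [Adj])
  have h₃ := hle (u.1, u.2 + 1) (by simp [Adj])
  have h₄ := hle (u.1, u.2 - 1) (by simp [Adj])
  simp only [lap] at hl
  rcases adj_cases_s14 huw with rfl | rfl | rfl | rfl <;> omega

lemma apply_center_eq_of_lap_nonneg {k : ℕ} (hsub : ∀ u, l1Dist u v ≤ k → 0 ≤ lap h u)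
    (hle : ∀ u, l1Dist u v ≤ k + 1 → h u ≤ M) {u : ℤ × ℤ} (hu : l1Dist u v ≤ k)
    (huM : h u = M) : h v = M := by
  obtain ⟨j, hj⟩ : ∃ j, l1Dist u v = j := ⟨_, rfl⟩
  induction j generalizing u with
  | zero => rwa [← l1Dist_eq_zero.mp hj]
  | succ j ih =>
    obtain ⟨u', huu', hu'⟩ := exists_adj_l1Dist_succ (u := u) (v := v)
      (fun huv => by simp [huv, l1Dist] at hj)
    have hu'M : h u' = M := eq_of_adj_of_lap_nonneg_of_le (hsub u hu) huM
      (fun w huw => hle w ((l1Dist_le_of_adj huw v).trans (by omega))) huu'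
    exact ih (by omega) hu'M (by omega)

lemma exists_le_apply_of_lap_nonneg {w : ℤ × ℤ} {R : ℕ}
    (hsub : ∀ u, l1Dist u v ≤ R → 0 ≤ lap h u) (hvw : Adj v w) (hne : h w ≠ h v) :
    ∀ k ≤ R + 1, ∃ u, l1Dist u v ≤ k ∧ h v + k ≤ h u := by
  intro k hk
  induction k with
  | zero => exact ⟨v, by simp [l1Dist], by simp⟩
  | succ k ih =>
    obtain ⟨u₁, hu₁, hvu₁⟩ := ih (by omega)
    obtain ⟨u₀, hu₀, hmax⟩ := Set.exists_max_image _ h (finite_setOf_l1Dist_le v k)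
      ⟨v, by simp [l1Dist]⟩
    by_contra! hgrow
    have hle : ∀ u, l1Dist u v ≤ k + 1 → h u ≤ h u₀ := fun u hu => by
      have := hgrow u hu
      have := hmax u₁ hu₁
      push_cast at *
      omega
    have hsubk : ∀ u, l1Dist u v ≤ k → 0 ≤ lap h u := fun u hu => hsub u (by omega)
    have hv : h v = h u₀ := apply_center_eq_of_lap_nonneg hsubk hle hu₀ rfl
    refine hne (hv ▸ eq_of_adj_of_lap_nonneg_of_le (hsubk v (by simp [l1Dist])) hv
      (fun w' hw' => hle w' ?_) hvw)
    have := l1Dist_le_of_adj hw' v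
    rw [l1Dist_eq_zero.mpr rfl] at this
    omega

lemma eq_of_adj_of_lap_nonneg {w : ℤ × ℤ} {R : ℕ}
    (hsub : ∀ u, l1Dist u v ≤ R → 0 ≤ lap h u) (hbound : ∀ u, l1Dist u v ≤ R + 1 → h u ≤ h v + R)
    (hvw : Adj v w) : h w = h v := by
  by_contra hne
  obtain ⟨u, hu, hvu⟩ := exists_le_apply_of_lap_nonneg hsub hvw hne (R + 1) le_rfl
  have := hbound u hu
  push_cast at hvu
  omega

end Subharmonic

/-- If `f` is superharmonic with `f₀ − n ≤ f ≤ f₀`, then there is `r > 0` depending only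
on `n` such that `h = f₀ − f` is constant on every connected component (for grid
adjacency) of the set of points at Euclidean distance at least `r` from
`C = {Δf₀ < 0}`. -/
theorem constant_far_from_corner (n : ℤ) (hn : 0 < n) :
    ∃ r : ℝ, 0 < r ∧
      ∀ p₀ q₀ p₁ q₁ p₂ q₂ : ℤ, p₁ * q₂ - p₂ * q₁ = 1 →
        ∀ f : ℤ × ℤ → ℤ,
          (∀ v, lap f v ≤ 0) →
          (∀ v, f0 p₀ q₀ p₁ q₁ p₂ q₂ v - n ≤ f v ∧ f v ≤ f0 p₀ q₀ p₁ q₁ p₂ q₂ v) →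
          ∀ v w : ℤ × ℤ,
            v ∈ {u : ℤ × ℤ | ∀ c ∈ Cset p₀ q₀ p₁ q₁ p₂ q₂, r ≤ dst u c} →
            w ∈ {u : ℤ × ℤ | ∀ c ∈ Cset p₀ q₀ p₁ q₁ p₂ q₂, r ≤ dst u c} →
            Relation.ReflTransGen
              (fun a b => Adj a b ∧
                (∀ c ∈ Cset p₀ q₀ p₁ q₁ p₂ q₂, r ≤ dst a c) ∧
                (∀ c ∈ Cset p₀ q₀ p₁ q₁ p₂ q₂, r ≤ dst b c)) v w →
            f0 p₀ q₀ p₁ q₁ p₂ q₂ v - f v = f0 p₀ q₀ p₁ q₁ p₂ q₂ w - f w := by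
  refine ⟨n + 1, by positivity, fun p₀ q₀ p₁ q₁ p₂ q₂ _ f hf hbound v w => ?_⟩
  rintro - - hpath
  set h : ℤ × ℤ → ℤ := fun u => f0 p₀ q₀ p₁ q₁ p₂ q₂ u - f u
  have hsub : ∀ u ∉ Cset p₀ q₀ p₁ q₁ p₂ q₂, 0 ≤ lap h u := fun u hu => by
    have := hf u
    rw [lap_sub]
    simp only [Cset, Set.mem_ofPred_eq, not_lt] at hu
    omega
  have hedge : ∀ a b, Adj a b → (∀ c ∈ Cset p₀ q₀ p₁ q₁ p₂ q₂, (n : ℝ) + 1 ≤ dst a c) →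
      h a = h b := fun a b hab hfar =>
    (eq_of_adj_of_lap_nonneg (R := n.toNat) (fun u hu => hsub u fun hC => by
        have hu' : (l1Dist u a : ℝ) ≤ n := by exact_mod_cast (by omega : (l1Dist u a : ℤ) ≤ n)
        linarith [hfar u hC, dst_le_l1Dist u a])
      (fun u _ => by simp only [h]; have := hbound u; have := hbound a; omega) hab).symm
  induction hpath with
  | refl => rfl
  | tail _ hstep ih => exact ih.trans (hedge _ _ hstep.1 hstep.2.1)
end

section
/- Let p₀, q₀, p₁, q₁, p₂, q₂ ∈ ℤ with p₁q₂ − p₂q₁ = 1, define f₀(x, y) = min(0, p₁x + q₁y, p₂x + q₂y) + p₀x + q₀y on ℤ², and let C = {v : Δf₀(v) < 0}. For n ∈ ℕ let 𝔉_n be the set of superharmonic functions f : ℤ² → ℤ with f₀ − n ≤ f ≤ f₀ such that f = f₀ outside some bounded neighborhood of C, and let f_n(v) = min_{f∈𝔉_n} f(v). Then for every v ∈ ℤ², 0 ≤ f_n(v) − f_{n+1}(v) ≤ 1. -/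
/-- The family `𝔉ₙ` of superharmonic functions squeezed between `f₀ − n` and `f₀` and
equal to `f₀` outside some bounded neighborhood of `C`. -/
def FF (p₀ q₀ p₁ q₁ p₂ q₂ : ℤ) (n : ℕ) : Set ((ℤ × ℤ) → ℤ) :=
  {f | (∀ v, lap f v ≤ 0) ∧
       (∀ v, f0 p₀ q₀ p₁ q₁ p₂ q₂ v - n ≤ f v ∧ f v ≤ f0 p₀ q₀ p₁ q₁ p₂ q₂ v) ∧
       ∃ r : ℝ, 0 < r ∧ ∀ v, (∀ c ∈ Cset p₀ q₀ p₁ q₁ p₂ q₂, r ≤ dst v c) →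
         f v = f0 p₀ q₀ p₁ q₁ p₂ q₂ v}

/-- The pointwise minimum `fₙ` of the family `𝔉ₙ`. -/
noncomputable def fmin (p₀ q₀ p₁ q₁ p₂ q₂ : ℤ) (n : ℕ) (v : ℤ × ℤ) : ℤ :=
  sInf {x : ℤ | ∃ f ∈ FF p₀ q₀ p₁ q₁ p₂ q₂ n, f v = x}

lemma lap_touch {h g : ℤ × ℤ → ℤ} (hle : ∀ w, h w ≤ g w) (v : ℤ × ℤ)
    (heq : h v = g v) (hg : lap g v ≤ 0) : lap h v ≤ 0 := by
  have h1 := hle (v.1 + 1, v.2)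
  have h2 := hle (v.1 - 1, v.2)
  have h3 := hle (v.1, v.2 + 1)
  have h4 := hle (v.1, v.2 - 1)
  unfold lap at *
  linarith

lemma lap_lin (a b c : ℤ) (v : ℤ × ℤ) :
    lap (fun w => a * w.1 + b * w.2 + c) v = 0 := by
  unfold lap; ring

lemma lap_f0 (p₀ q₀ p₁ q₁ p₂ q₂ : ℤ) (v : ℤ × ℤ) :
    lap (f0 p₀ q₀ p₁ q₁ p₂ q₂) v ≤ 0 := by
  have key : ∀ a b c : ℤ, (∀ w, f0 p₀ q₀ p₁ q₁ p₂ q₂ w ≤ a * w.1 + b * w.2 + c) →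
      f0 p₀ q₀ p₁ q₁ p₂ q₂ v = a * v.1 + b * v.2 + c →
      lap (f0 p₀ q₀ p₁ q₁ p₂ q₂) v ≤ 0 := by
    intro a b c hle heq
    exact lap_touch hle v heq (le_of_eq (lap_lin a b c v))
  rcases min_cases (min 0 (p₁ * v.1 + q₁ * v.2)) (p₂ * v.1 + q₂ * v.2) with ⟨h, _⟩ | ⟨h, _⟩
  · rcases min_cases (0 : ℤ) (p₁ * v.1 + q₁ * v.2) with ⟨h', _⟩ | ⟨h', _⟩
    · apply key p₀ q₀ 0
      · intro w
        have := min_le_left (min 0 (p₁ * w.1 + q₁ * w.2)) (p₂ * w.1 + q₂ * w.2)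
        have := min_le_left (0 : ℤ) (p₁ * w.1 + q₁ * w.2)
        unfold f0; linarith
      · unfold f0; rw [h, h']; ring
    · apply key (p₁ + p₀) (q₁ + q₀) 0
      · intro w
        have := min_le_left (min 0 (p₁ * w.1 + q₁ * w.2)) (p₂ * w.1 + q₂ * w.2)
        have := min_le_right (0 : ℤ) (p₁ * w.1 + q₁ * w.2)
        unfold f0; linarith
      · unfold f0; rw [h, h']; ring
  · apply key (p₂ + p₀) (q₂ + q₀) 0
    · intro w
      have := min_le_right (min 0 (p₁ * w.1 + q₁ * w.2)) (p₂ * w.1 + q₂ * w.2)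
      unfold f0; linarith
    · unfold f0; rw [h]; ring

lemma f0_mem_FF (p₀ q₀ p₁ q₁ p₂ q₂ : ℤ) (n : ℕ) :
    f0 p₀ q₀ p₁ q₁ p₂ q₂ ∈ FF p₀ q₀ p₁ q₁ p₂ q₂ n := by
  refine ⟨lap_f0 _ _ _ _ _ _, fun v => ⟨by simp [Int.ofNat_nonneg], le_refl _⟩,
    1, one_pos, fun v _ => rfl⟩

lemma FF_nonempty_set (p₀ q₀ p₁ q₁ p₂ q₂ : ℤ) (n : ℕ) (v : ℤ × ℤ) :
    {x : ℤ | ∃ f ∈ FF p₀ q₀ p₁ q₁ p₂ q₂ n, f v = x}.Nonempty :=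
  ⟨f0 p₀ q₀ p₁ q₁ p₂ q₂ v, f0 p₀ q₀ p₁ q₁ p₂ q₂, f0_mem_FF _ _ _ _ _ _ _, rfl⟩

lemma FF_bdd (p₀ q₀ p₁ q₁ p₂ q₂ : ℤ) (n : ℕ) (v : ℤ × ℤ) :
    BddBelow {x : ℤ | ∃ f ∈ FF p₀ q₀ p₁ q₁ p₂ q₂ n, f v = x} := by
  refine ⟨f0 p₀ q₀ p₁ q₁ p₂ q₂ v - n, ?_⟩
  rintro x ⟨f, hf, rfl⟩
  exact (hf.2.1 v).1
/-- Consecutive minimizers differ at most by one: `0 ≤ fₙ − fₙ₊₁ ≤ 1` pointwise. -/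
theorem fmin_consecutive_steps (p₀ q₀ p₁ q₁ p₂ q₂ : ℤ)
    (hdet : p₁ * q₂ - p₂ * q₁ = 1) (n : ℕ) :
    ∀ v : ℤ × ℤ,
      0 ≤ fmin p₀ q₀ p₁ q₁ p₂ q₂ n v - fmin p₀ q₀ p₁ q₁ p₂ q₂ (n + 1) v ∧
      fmin p₀ q₀ p₁ q₁ p₂ q₂ n v - fmin p₀ q₀ p₁ q₁ p₂ q₂ (n + 1) v ≤ 1 := by
  intro v
  set Sn := {x : ℤ | ∃ f ∈ FF p₀ q₀ p₁ q₁ p₂ q₂ n, f v = x} with hSn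
  set Sm := {x : ℤ | ∃ f ∈ FF p₀ q₀ p₁ q₁ p₂ q₂ (n + 1), f v = x} with hSm
  have hsub : Sn ⊆ Sm := by
    rintro x ⟨f, ⟨hlap, hbd, hr⟩, rfl⟩
    refine ⟨f, ⟨hlap, fun w => ⟨?_, (hbd w).2⟩, hr⟩, rfl⟩
    have := (hbd w).1
    push_cast
    linarith
  have h1 : fmin p₀ q₀ p₁ q₁ p₂ q₂ (n + 1) v ≤ fmin p₀ q₀ p₁ q₁ p₂ q₂ n v :=
    csInf_le_csInf (FF_bdd _ _ _ _ _ _ _ _) (FF_nonempty_set _ _ _ _ _ _ _ _) hsub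
  have h2 : fmin p₀ q₀ p₁ q₁ p₂ q₂ n v ≤ fmin p₀ q₀ p₁ q₁ p₂ q₂ (n + 1) v + 1 := by
    have : fmin p₀ q₀ p₁ q₁ p₂ q₂ n v - 1 ≤ fmin p₀ q₀ p₁ q₁ p₂ q₂ (n + 1) v := by
      apply le_csInf (FF_nonempty_set _ _ _ _ _ _ _ _)
      rintro x ⟨f, ⟨hlap, hbd, r, hrpos, hr⟩, rfl⟩
      set g : (ℤ × ℤ) → ℤ := fun w => min (f w + 1) (f0 p₀ q₀ p₁ q₁ p₂ q₂ w) with hg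
      have hgmem : g ∈ FF p₀ q₀ p₁ q₁ p₂ q₂ n := by
        refine ⟨?_, ?_, r, hrpos, ?_⟩
        · intro w
          rcases min_cases (f w + 1) (f0 p₀ q₀ p₁ q₁ p₂ q₂ w) with ⟨h, _⟩ | ⟨h, _⟩
          · refine lap_touch (h := g) (g := fun u => f u + 1)
              (fun u => min_le_left _ _) w h ?_
            have : lap (fun u => f u + 1) w = lap f w := by unfold lap; ring
            rw [this]; exact hlap w
          · exact lap_touch (fun u => min_le_right _ _) w h (lap_f0 _ _ _ _ _ _ _)
        · intro w
          refine ⟨?_, min_le_right _ _⟩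
          have h1 := (hbd w).1
          have h2 := (hbd w).2
          simp only [hg, le_min_iff]
          constructor
          · push_cast at h1 ⊢; linarith
          · push_cast at h1 ⊢; linarith
        · intro w hw
          have := hr w hw
          simp [hg, this]
      have hle : fmin p₀ q₀ p₁ q₁ p₂ q₂ n v ≤ g v :=
        csInf_le (FF_bdd _ _ _ _ _ _ _ _) ⟨g, hgmem, rfl⟩
      have : g v ≤ f v + 1 := min_le_left _ _
      linarith
    linarith
  omega
end

section
/- Let Ω ⊆ ℝ² be a compact convex set with nonempty interior, and for w ∈ ℤ² let c_w = min_{y∈Ω} w·y. Then the weighted distance function l_Ω(x) = inf_{w∈ℤ²∖{0}} (w·x − c_w), defined for x ∈ Ω, extends continuously to ∂Ω by zero; in particular, for every boundary point x ∈ ∂Ω one has inf_{w∈ℤ²∖{0}} (w·x − c_w) = 0, while l_Ω(x) > 0 for every interior point x of Ω. -/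
/-- Scalar product of an integer vector with a real vector. -/
def dotR (w : ℤ × ℤ) (x : ℝ × ℝ) : ℝ :=
  (w.1 : ℝ) * x.1 + (w.2 : ℝ) * x.2

/-- The support value `c_w = min_{y ∈ Ω} w·y`. -/
noncomputable def suppVal (Ω : Set (ℝ × ℝ)) (w : ℤ × ℤ) : ℝ :=
  sInf ((fun y => dotR w y) '' Ω)

/-- The weighted distance function `l_Ω(x) = inf_{w ∈ ℤ²∖{0}} (w·x − c_w)`. -/
noncomputable def wdist (Ω : Set (ℝ × ℝ)) (x : ℝ × ℝ) : ℝ :=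
  ⨅ w : {w : ℤ × ℤ // w ≠ 0}, (dotR w.1 x - suppVal Ω w.1)

instance : Nonempty {w : ℤ × ℤ // w ≠ 0} := ⟨⟨(1, 0), by simp⟩⟩

lemma continuous_dotR (w : ℤ × ℤ) : Continuous (dotR w) := by
  unfold dotR; fun_prop

lemma suppVal_le {Ω : Set (ℝ × ℝ)} (hcomp : IsCompact Ω) (w : ℤ × ℤ) {y : ℝ × ℝ}
    (hy : y ∈ Ω) : suppVal Ω w ≤ dotR w y :=
  csInf_le ((hcomp.image (continuous_dotR w)).bddBelow) ⟨y, hy, rfl⟩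

lemma le_suppVal {Ω : Set (ℝ × ℝ)} (hne : Ω.Nonempty) (w : ℤ × ℤ) {a : ℝ}
    (h : ∀ y ∈ Ω, a ≤ dotR w y) : a ≤ suppVal Ω w :=
  le_csInf (hne.image _) (by rintro b ⟨y, hy, rfl⟩; exact h y hy)

lemma term_nonneg {Ω : Set (ℝ × ℝ)} (hcomp : IsCompact Ω) (w : ℤ × ℤ) {x : ℝ × ℝ}
    (hx : x ∈ Ω) : 0 ≤ dotR w x - suppVal Ω w :=
  sub_nonneg.2 (suppVal_le hcomp w hx)

lemma bdd_range {Ω : Set (ℝ × ℝ)} (hcomp : IsCompact Ω) {x : ℝ × ℝ} (hx : x ∈ Ω) :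
    BddBelow (Set.range fun w : {w : ℤ × ℤ // w ≠ 0} => dotR w.1 x - suppVal Ω w.1) :=
  ⟨0, by rintro b ⟨w, rfl⟩; exact term_nonneg hcomp w.1 hx⟩

lemma wdist_nonneg {Ω : Set (ℝ × ℝ)} (hcomp : IsCompact Ω) {x : ℝ × ℝ} (hx : x ∈ Ω) :
    0 ≤ wdist Ω x :=
  le_ciInf fun w => term_nonneg hcomp w.1 hx

lemma wdist_le {Ω : Set (ℝ × ℝ)} (hcomp : IsCompact Ω) {x : ℝ × ℝ} (hx : x ∈ Ω)
    {w : ℤ × ℤ} (hw : w ≠ 0) : wdist Ω x ≤ dotR w x - suppVal Ω w :=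
  ciInf_le (bdd_range hcomp hx) ⟨w, hw⟩

/-- Approximate a direction `v ≠ 0` by an integer vector: `w ≈ t v`. -/
lemma exists_int_approx (v : ℝ × ℝ) (hv : v ≠ 0) {δ : ℝ} (hδ : 0 < δ) :
    ∃ (w : ℤ × ℤ) (t : ℝ), w ≠ 0 ∧ 0 ≤ t ∧
      |(w.1 : ℝ) - t * v.1| ≤ δ ∧ |(w.2 : ℝ) - t * v.2| ≤ δ := by
  by_cases h2 : v.2 = 0
  · have h1 : v.1 ≠ 0 := by
      intro h1; exact hv (Prod.ext h1 h2)
    rcases h1.lt_or_gt with hlt | hlt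
    · refine ⟨(-1, 0), 1 / |v.1|, by simp, by positivity, ?_, ?_⟩
      · have : |v.1| = -v.1 := abs_of_neg hlt
        rw [this]
        have : (1 / -v.1) * v.1 = -1 := by field_simp
        rw [this]; simp [hδ.le]
      · simp [h2, hδ.le]
    · refine ⟨(1, 0), 1 / |v.1|, by simp, by positivity, ?_, ?_⟩
      · have : |v.1| = v.1 := abs_of_pos hlt
        rw [this]
        have : (1 / v.1) * v.1 = 1 := by field_simp
        rw [this]; simp [hδ.le]
      · simp [h2, hδ.le]
  · -- v.2 ≠ 0, use Dirichlet on α = v.1 / v.2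
    set α : ℝ := v.1 / v.2 with hα
    obtain ⟨n, hn⟩ := exists_nat_gt (1 / δ)
    have hn0 : 0 < n := by
      by_contra h
      push_neg at h
      interval_cases n
      simp only [Nat.cast_zero] at hn
      have : (0:ℝ) < 1 / δ := by positivity
      linarith
    obtain ⟨j, k, hk0, hkn, hjk⟩ := Real.exists_int_int_abs_mul_sub_le α hn0
    have hδn : 1 / ((n : ℝ) + 1) ≤ δ := by
      rw [div_le_iff₀ (by positivity)]
      rw [div_lt_iff₀ hδ] at hn
      nlinarith
    have habs : |(k : ℝ) * α - j| ≤ δ := hjk.trans hδn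
    set s : ℤ := if 0 < v.2 then 1 else -1 with hs
    have hsv : (s : ℝ) * v.2 = |v.2| := by
      rcases (lt_or_gt_of_ne h2) with h | h
      · simp [hs, not_lt.2 h.le, abs_of_neg h]
      · simp [hs, h, abs_of_pos h]
    have hsabs : |(s : ℝ)| = 1 := by
      rcases (lt_or_gt_of_ne h2) with h | h
      · simp [hs, not_lt.2 h.le]
      · simp [hs, h]
    have hv2 : |v.2| > 0 := abs_pos.2 h2
    refine ⟨(s * j, s * k), k / |v.2|, ?_, by positivity, ?_, ?_⟩
    · intro h
      have := congrArg Prod.snd h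
      simp only [Prod.snd_zero] at this
      have hs0 : s ≠ 0 := by
        rcases (lt_or_gt_of_ne h2) with h | h <;> simp [hs, not_lt.2 h.le, h]
      exact (mul_ne_zero hs0 hk0.ne') this
    · have key : (k : ℝ) / |v.2| * v.1 = (s : ℝ) * ((k : ℝ) * α) := by
        rcases (lt_or_gt_of_ne h2) with h | h
        · rw [abs_of_neg h]
          simp only [hs, if_neg (not_lt.2 h.le), Int.cast_neg, Int.cast_one, hα]
          rw [div_mul_eq_mul_div, div_eq_iff (by linarith : -v.2 ≠ 0)]
          field_simp
        · rw [abs_of_pos h]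
          simp only [hs, if_pos h, Int.cast_one, hα, one_mul]
          rw [div_mul_eq_mul_div, div_eq_iff h.ne']
          field_simp
      push_cast
      rw [key, ← mul_sub]
      rw [abs_mul, hsabs, one_mul]
      rwa [abs_sub_comm]
    · have key : (k : ℝ) / |v.2| * v.2 = (s : ℝ) * k := by
        rcases (lt_or_gt_of_ne h2) with h | h
        · rw [abs_of_neg h]
          simp only [hs, if_neg (not_lt.2 h.le), Int.cast_neg, Int.cast_one]
          rw [div_mul_eq_mul_div, div_eq_iff (by linarith : -v.2 ≠ 0)]
          ring
        · rw [abs_of_pos h]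
          simp only [hs, if_pos h, Int.cast_one, one_mul]
          rw [div_mul_eq_mul_div, div_eq_iff h.ne']
      push_cast
      rw [key]
      simp [hδ.le]

/-- Supporting direction at a boundary point. -/
lemma exists_support_dir {Ω : Set (ℝ × ℝ)} (hconv : Convex ℝ Ω)
    (hint : (interior Ω).Nonempty) {x : ℝ × ℝ} (hx : x ∈ frontier Ω) :
    ∃ v : ℝ × ℝ, v ≠ 0 ∧ ∀ y ∈ Ω, 0 ≤ v.1 * (y.1 - x.1) + v.2 * (y.2 - x.2) := by
  have hxint : x ∉ interior Ω := hx.2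
  obtain ⟨f, hf⟩ := geometric_hahn_banach_open_point (hconv.interior) isOpen_interior hxint
  obtain ⟨z, hz⟩ := hint
  have hΩle : ∀ y ∈ Ω, f y ≤ f x := by
    intro y hy
    have hyc : y ∈ closure Ω := subset_closure hy
    have htend : Filter.Tendsto (fun t : ℝ => t • z + (1 - t) • y) (nhdsWithin 0 (Set.Ioi 0))
        (nhds y) := by
      have : Filter.Tendsto (fun t : ℝ => t • z + (1 - t) • y) (nhds 0) (nhds y) := by
        have hc : Continuous (fun t : ℝ => t • z + (1 - t) • y) := by fun_prop
        have := hc.tendsto 0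
        simpa using this
      exact this.mono_left nhdsWithin_le_nhds
    have hev : ∀ᶠ t in nhdsWithin (0:ℝ) (Set.Ioi 0), f (t • z + (1 - t) • y) ≤ f x := by
      have hmem : ∀ᶠ t in nhdsWithin (0:ℝ) (Set.Ioi 0), t ∈ Set.Ioi (0:ℝ) :=
        eventually_mem_nhdsWithin
      have hlt1 : ∀ᶠ t in nhdsWithin (0:ℝ) (Set.Ioi 0), t < 1 :=
        ((isOpen_Iio.eventually_mem (by norm_num : (0:ℝ) ∈ Set.Iio 1)).filter_mono
          nhdsWithin_le_nhds)
      filter_upwards [hmem, hlt1] with t ht ht1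
      have : t • z + (1 - t) • y ∈ interior Ω :=
        hconv.combo_interior_closure_mem_interior hz hyc ht (by linarith) (by ring)
      exact (hf _ this).le
    have : Filter.Tendsto (fun t : ℝ => f (t • z + (1 - t) • y)) (nhdsWithin 0 (Set.Ioi 0))
        (nhds (f y)) := (f.continuous.tendsto y).comp htend
    exact le_of_tendsto this hev
  refine ⟨(-(f (1, 0)), -(f (0, 1))), ?_, ?_⟩
  · intro h
    have h1 : f (1, 0) = 0 := by
      have := congrArg Prod.fst h; simpa using this
    have h2 : f (0, 1) = 0 := by
      have := congrArg Prod.snd h; simpa using this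
    have hfz : ∀ p : ℝ × ℝ, f p = 0 := by
      intro p
      have hp : p = p.1 • ((1:ℝ), (0:ℝ)) + p.2 • ((0:ℝ), (1:ℝ)) := by
        ext <;> simp
      rw [hp, map_add, map_smul, map_smul, h1, h2]
      simp
    have := hf z hz
    rw [hfz z, hfz x] at this
    exact lt_irrefl _ this
  · intro y hy
    have hrep : ∀ p : ℝ × ℝ, f p = f (1, 0) * p.1 + f (0, 1) * p.2 := by
      intro p
      have hp : p = p.1 • ((1:ℝ), (0:ℝ)) + p.2 • ((0:ℝ), (1:ℝ)) := by
        ext <;> simp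
      conv_lhs => rw [hp]
      rw [map_add, map_smul, map_smul]
      simp [mul_comm]
    have := hΩle y hy
    rw [hrep y, hrep x] at this
    simp only
    nlinarith

/-- At a frontier point, for every `ε > 0` there is a nonzero integer vector whose
support value is within `ε` of its value at `x`. -/
lemma exists_good_w {Ω : Set (ℝ × ℝ)} (hcomp : IsCompact Ω) (hconv : Convex ℝ Ω)
    (hint : (interior Ω).Nonempty) {x : ℝ × ℝ} (hx : x ∈ frontier Ω) {ε : ℝ} (hε : 0 < ε) :
    ∃ w : ℤ × ℤ, w ≠ 0 ∧ ∀ y ∈ Ω, dotR w x - ε ≤ dotR w y := by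
  obtain ⟨v, hv, hvsupp⟩ := exists_support_dir hconv hint hx
  obtain ⟨R, hR⟩ := hcomp.isBounded.subset_closedBall 0
  have hxΩ : x ∈ Ω := by
    rw [← hcomp.isClosed.closure_eq]; exact hx.1
  have hR0 : 0 ≤ R := by
    have := hR hxΩ
    simp only [Metric.mem_closedBall, dist_zero_right] at this
    exact (norm_nonneg x).trans this
  have hbound : ∀ y ∈ Ω, |y.1 - x.1| ≤ 2 * R ∧ |y.2 - x.2| ≤ 2 * R := by
    intro y hy
    have h1 := hR hy
    have h2 := hR hxΩ
    simp only [Metric.mem_closedBall, dist_zero_right] at h1 h2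
    have hy1 : |y.1| ≤ R := (norm_fst_le y).trans h1
    have hy2 : |y.2| ≤ R := (norm_snd_le y).trans h1
    have hx1 : |x.1| ≤ R := (norm_fst_le x).trans h2
    have hx2 : |x.2| ≤ R := (norm_snd_le x).trans h2
    constructor
    · calc |y.1 - x.1| ≤ |y.1| + |x.1| := abs_sub _ _
        _ ≤ 2 * R := by linarith
    · calc |y.2 - x.2| ≤ |y.2| + |x.2| := abs_sub _ _
        _ ≤ 2 * R := by linarith
  set δ : ℝ := ε / (8 * R + 1) with hδdef
  have hδ : 0 < δ := by positivity
  obtain ⟨w, t, hw0, ht, he1, he2⟩ := exists_int_approx v hv hδ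
  refine ⟨w, hw0, fun y hy => ?_⟩
  obtain ⟨hb1, hb2⟩ := hbound y hy
  have hvy := hvsupp y hy
  have key : dotR w y - dotR w x
      = t * (v.1 * (y.1 - x.1) + v.2 * (y.2 - x.2))
        + ((w.1 : ℝ) - t * v.1) * (y.1 - x.1) + ((w.2 : ℝ) - t * v.2) * (y.2 - x.2) := by
    unfold dotR; ring
  have hm1 : |((w.1 : ℝ) - t * v.1) * (y.1 - x.1)| ≤ δ * (2 * R) := by
    rw [abs_mul]
    exact mul_le_mul he1 hb1 (abs_nonneg _) hδ.le
  have hm2 : |((w.2 : ℝ) - t * v.2) * (y.2 - x.2)| ≤ δ * (2 * R) := by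
    rw [abs_mul]
    exact mul_le_mul he2 hb2 (abs_nonneg _) hδ.le
  have hδR : δ * (2 * R) + δ * (2 * R) ≤ ε := by
    rw [hδdef]
    rw [div_mul_eq_mul_div, ← add_div,
      div_le_iff₀ (by positivity : (0:ℝ) < 8 * R + 1)]
    nlinarith
  have ht1 : 0 ≤ t * (v.1 * (y.1 - x.1) + v.2 * (y.2 - x.2)) := mul_nonneg ht hvy
  have g1 := neg_abs_le (((w.1 : ℝ) - t * v.1) * (y.1 - x.1))
  have g2 := neg_abs_le (((w.2 : ℝ) - t * v.2) * (y.2 - x.2))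
  linarith [key]

lemma wdist_frontier_zero {Ω : Set (ℝ × ℝ)} (hcomp : IsCompact Ω) (hconv : Convex ℝ Ω)
    (hint : (interior Ω).Nonempty) {x : ℝ × ℝ} (hx : x ∈ frontier Ω) :
    wdist Ω x = 0 := by
  have hxΩ : x ∈ Ω := by
    rw [← hcomp.isClosed.closure_eq]; exact hx.1
  have hne : Ω.Nonempty := ⟨x, hxΩ⟩
  refine le_antisymm ?_ (wdist_nonneg hcomp hxΩ)
  have h : ∀ ε > (0:ℝ), wdist Ω x ≤ 0 + ε := by
    intro ε hε
    obtain ⟨w, hw0, hwp⟩ := exists_good_w hcomp hconv hint hx hε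
    have hsupp : dotR w x - ε ≤ suppVal Ω w := le_suppVal hne w hwp
    have := wdist_le hcomp hxΩ hw0
    linarith
  exact le_of_forall_pos_le_add h

lemma wdist_concave {Ω : Set (ℝ × ℝ)} (hcomp : IsCompact Ω) (hconv : Convex ℝ Ω) :
    ConcaveOn ℝ Ω (wdist Ω) := by
  refine ⟨hconv, fun x hx y hy a b ha hb hab => ?_⟩
  refine le_ciInf fun w => ?_
  have hx' := wdist_le hcomp hx w.2
  have hy' := wdist_le hcomp hy w.2
  have hdot : dotR w.1 (a • x + b • y) = a * dotR w.1 x + b * dotR w.1 y := by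
    unfold dotR
    simp only [Prod.fst_add, Prod.snd_add, Prod.smul_fst, Prod.smul_snd, smul_eq_mul]
    ring
  have hsupp : suppVal Ω w.1 = a * suppVal Ω w.1 + b * suppVal Ω w.1 := by
    rw [← add_mul, hab, one_mul]
  rw [hdot, smul_eq_mul, smul_eq_mul]
  nlinarith [mul_le_mul_of_nonneg_left hx' ha, mul_le_mul_of_nonneg_left hy' hb]

lemma wdist_pos_interior {Ω : Set (ℝ × ℝ)} (hcomp : IsCompact Ω) {x : ℝ × ℝ}
    (hx : x ∈ interior Ω) : 0 < wdist Ω x := by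
  obtain ⟨r, hr0, hr⟩ := Metric.isOpen_iff.1 isOpen_interior x hx
  have hball : Metric.ball x r ⊆ Ω := hr.trans interior_subset
  have hxΩ : x ∈ Ω := interior_subset hx
  have key : ∀ w : {w : ℤ × ℤ // w ≠ 0}, r / 2 ≤ dotR w.1 x - suppVal Ω w.1 := by
    rintro ⟨w, hw⟩
    set m : ℝ := Real.sqrt ((w.1 : ℝ)^2 + (w.2 : ℝ)^2) with hm
    have hsum1 : (1 : ℤ) ≤ w.1^2 + w.2^2 := by
      by_contra h
      push_neg at h
      have h1 : w.1 = 0 := by nlinarith [sq_nonneg w.1, sq_nonneg w.2]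
      have h2 : w.2 = 0 := by nlinarith [sq_nonneg w.1, sq_nonneg w.2]
      exact hw (by rw [Prod.ext_iff]; exact ⟨h1, h2⟩)
    have hsumR : (1 : ℝ) ≤ (w.1 : ℝ)^2 + (w.2 : ℝ)^2 := by exact_mod_cast hsum1
    have hm1 : 1 ≤ m := by
      rw [hm, show (1:ℝ) = Real.sqrt 1 by simp]
      exact Real.sqrt_le_sqrt hsumR
    have hm0 : 0 < m := lt_of_lt_of_le one_pos hm1
    have hmm : m * m = (w.1 : ℝ)^2 + (w.2 : ℝ)^2 :=
      Real.mul_self_sqrt (by positivity)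
    have hw1m : |(w.1 : ℝ)| ≤ m := by
      rw [hm, ← Real.sqrt_sq_eq_abs]
      exact Real.sqrt_le_sqrt (by nlinarith [sq_nonneg (w.2 : ℝ)])
    have hw2m : |(w.2 : ℝ)| ≤ m := by
      rw [hm, ← Real.sqrt_sq_eq_abs]
      exact Real.sqrt_le_sqrt (by nlinarith [sq_nonneg (w.1 : ℝ)])
    set y : ℝ × ℝ := (x.1 - (r/2) * (w.1 : ℝ) / m, x.2 - (r/2) * (w.2 : ℝ) / m) with hy
    have hyball : y ∈ Metric.ball x r := by
      rw [Metric.mem_ball]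
      have hd : dist y x = max (dist y.1 x.1) (dist y.2 x.2) := rfl
      rw [hd]
      have hd1 : dist y.1 x.1 < r := by
        rw [Real.dist_eq, hy]
        simp only [sub_sub_cancel_left, abs_neg, abs_div]
        rw [abs_of_pos hm0, div_lt_iff₀ hm0, abs_mul, abs_of_pos (by linarith : (0:ℝ) < r/2)]
        nlinarith
      have hd2 : dist y.2 x.2 < r := by
        rw [Real.dist_eq, hy]
        simp only [sub_sub_cancel_left, abs_neg, abs_div]
        rw [abs_of_pos hm0, div_lt_iff₀ hm0, abs_mul, abs_of_pos (by linarith : (0:ℝ) < r/2)]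
        nlinarith
      exact max_lt hd1 hd2
    have hyΩ : y ∈ Ω := hball hyball
    have hsv := suppVal_le hcomp w hyΩ
    have hdoty : dotR w y = dotR w x - (r/2) * m := by
      unfold dotR
      rw [hy]
      field_simp
      nlinarith [hmm]
    have : suppVal Ω w ≤ dotR w x - (r/2) * m := by rw [← hdoty]; exact hsv
    nlinarith
  have := le_ciInf key
  calc (0:ℝ) < r / 2 := by linarith
    _ ≤ wdist Ω x := this

/-- For a compact convex `Ω ⊆ ℝ²` with nonempty interior, the weighted distance function
is continuous on `Ω`, vanishes at every boundary point, and is positive at every interior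
point: it extends continuously to `∂Ω` by zero. -/
theorem weighted_distance_boundary (Ω : Set (ℝ × ℝ))
    (hcomp : IsCompact Ω) (hconv : Convex ℝ Ω) (hint : (interior Ω).Nonempty) :
    ContinuousOn (wdist Ω) Ω ∧
    (∀ x ∈ frontier Ω, wdist Ω x = 0) ∧
    (∀ x ∈ interior Ω, 0 < wdist Ω x) := by
  have hne : Ω.Nonempty := hint.mono interior_subset
  refine ⟨?_, fun x hx => wdist_frontier_zero hcomp hconv hint hx,
    fun x hx => wdist_pos_interior hcomp hx⟩
  have hcont0 : ContinuousOn (wdist Ω) (interior Ω) :=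
    (wdist_concave hcomp hconv).continuousOn_interior
  intro x hx
  by_cases hxi : x ∈ interior Ω
  · exact ((hcont0.continuousAt (mem_interior_iff_mem_nhds.1
      (by rwa [interior_interior]))).continuousWithinAt)
  · have hxf : x ∈ frontier Ω := ⟨subset_closure hx, hxi⟩
    have h0 : wdist Ω x = 0 := wdist_frontier_zero hcomp hconv hint hxf
    rw [ContinuousWithinAt, h0]
    rw [Metric.tendsto_nhds]
    intro ε hε
    obtain ⟨w, hw0, hwp⟩ := exists_good_w hcomp hconv hint hxf (half_pos hε)
    have hsupp : dotR w x - ε / 2 ≤ suppVal Ω w := le_suppVal hne w hwp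
    have hev1 : ∀ᶠ z in nhdsWithin x Ω, z ∈ Ω := eventually_mem_nhdsWithin
    have hev2 : ∀ᶠ z in nhdsWithin x Ω, dist (dotR w z) (dotR w x) < ε / 2 :=
      ((Metric.tendsto_nhds.1 ((continuous_dotR w).tendsto x)) (ε / 2)
        (half_pos hε)).filter_mono nhdsWithin_le_nhds
    filter_upwards [hev1, hev2] with z hz hz2
    rw [Real.dist_eq, sub_zero, abs_of_nonneg (wdist_nonneg hcomp hz)]
    have h1 := wdist_le hcomp hz hw0
    rw [Real.dist_eq] at hz2
    have h2 := abs_lt.1 hz2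
    linarith [h2.1, h2.2]
end
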